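/- arXiv:1006.5558 — 3 statements merged into one kernel-verified Lean document; each statement's English description precedes it below -/
import Mathlib

section
/- Let f : (0, r₀] → ℝ be continuous with f(r) = O(r²) as r → 0⁺ (i.e. there is C with |f(r)| ≤ C r² for r ∈ (0, r₀]). Then any C¹ solution y : (0, r₁] → ℝ (0 < r₁ ≤ r₀) of the Riccati-type equation y′(r) = 1 + f(r) y(r)², which remains bounded as r → 0⁺ and satisfies y(r) → 0 as r → 0⁺, satisfies y(r) = r + O(r⁵) as r → 0⁺, i.e. |y(r) − r| ≤ C′ r⁵ on some interval (0, r₂]. -/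
/-!
Since `y(0⁺) = 0`, the function `y(r) - r` vanishes at `0⁺` and has derivative `f y²`, so a bound
`|f y²| ≤ K rᵏ` integrates to `|y(r) - r| ≤ K rᵏ⁺¹ / (k + 1)`. Boundedness of `y` gives
`|f y²| = O(r²)`, hence `y = r + O(r³)`, so `|y| ≤ 2r` near `0`; feeding this back gives
`|f y²| = O(r⁴)` and therefore `y = r + O(r⁵)`.
-/

open Set Filter Topology

theorem abs_le_of_tendsto_zero_of_abs_deriv_le {g g' : ℝ → ℝ} {a K : ℝ} {k : ℕ}
    (hg : ∀ r ∈ Ioc 0 a, HasDerivAt g (g' r) r) (hlim : Tendsto g (𝓝[>] 0) (𝓝 0))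
    (hg' : ∀ r ∈ Ioc 0 a, |g' r| ≤ K * r ^ k) :
    ∀ r ∈ Ioc 0 a, |g r| ≤ K / (k + 1) * r ^ (k + 1) := by
  intro r ⟨hr, hra⟩
  set F : ℝ → ℝ := fun s => K / (k + 1) * s ^ (k + 1)
  have hF : ∀ s, HasDerivAt F (K * s ^ k) s := fun s =>
    ((hasDerivAt_pow (k + 1) s).const_mul _).congr_deriv (by push_cast; field_simp)
  have hfence : ∀ ε ∈ Ioc 0 r, |g r| ≤ F r - F ε + |g ε| := by
    intro ε ⟨hε, hεr⟩
    have hsub : Icc ε r ⊆ Ioc 0 a := fun s hs => ⟨hε.trans_le hs.1, hs.2.trans hra⟩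
    exact image_norm_le_of_norm_deriv_right_le_deriv_boundary
      (fun s hs => (hg s (hsub hs)).continuousAt.continuousWithinAt)
      (fun s hs => (hg s (hsub (Ico_subset_Icc_self hs))).hasDerivWithinAt)
      (B := fun s => F s - F ε + |g ε|) (by simp) (fun s => ((hF s).sub_const _).add_const _)
      (fun s hs => hg' s (hsub (Ico_subset_Icc_self hs))) ⟨hεr, le_rfl⟩
  have hlim_fence : Tendsto (fun ε => F r - F ε + |g ε|) (𝓝[>] 0) (𝓝 (F r - F 0 + |0|)) :=
    (tendsto_const_nhds.sub ((hF 0).continuousAt.tendsto.mono_left nhdsWithin_le_nhds)).add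
      hlim.abs
  simpa [F] using ge_of_tendsto hlim_fence (mem_of_superset (Ioc_mem_nhdsGT hr) hfence)

theorem abs_sub_self_le_of_abs_deriv_sub_one_le {y y' : ℝ → ℝ} {a K : ℝ} {k : ℕ}
    (hy : ∀ r ∈ Ioc 0 a, HasDerivAt y (y' r) r) (hlim : Tendsto y (𝓝[>] 0) (𝓝 0))
    (hy' : ∀ r ∈ Ioc 0 a, |y' r - 1| ≤ K * r ^ k) :
    ∀ r ∈ Ioc 0 a, |y r - r| ≤ K / (k + 1) * r ^ (k + 1) :=
  abs_le_of_tendsto_zero_of_abs_deriv_le (fun r hr => (hy r hr).sub (hasDerivAt_id r))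
    (by simpa using hlim.sub (tendsto_nhdsWithin_of_tendsto_nhds tendsto_id)) hy'

theorem abs_mul_sq_le_of_abs_le {a b C M s : ℝ} (ha : |a| ≤ C * s ^ 2) (hb : |b| ≤ M) : |a * b ^ 2| ≤ C * M ^ 2 * s ^ 2 := by
  have hb2 : b ^ 2 ≤ M ^ 2 := by simpa only [sq_abs] using pow_le_pow_left₀ (abs_nonneg b) hb 2
  rw [abs_mul, abs_of_nonneg (sq_nonneg b)]
  nlinarith [abs_nonneg a, sq_nonneg s, sq_nonneg b]

theorem abs_le_two_mul_of_abs_sub_le {y r c : ℝ} (hr : 0 ≤ r) (hcr : c * r ^ 2 ≤ 1)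
    (h : |y - r| ≤ c * r ^ 3) : |y| ≤ 2 * r := by
  have := abs_sub_abs_le_abs_sub y r
  rw [abs_of_nonneg hr] at this
  nlinarith

theorem mul_sq_le_one_of_le_one_div {c r : ℝ} (hc : 0 ≤ c) (hr : 0 < r) (h : r ≤ 1 / (1 + c)) :
    c * r ^ 2 ≤ 1 := by
  rw [le_div_iff₀ (by positivity)] at h
  nlinarith

theorem stmt0_general (r₀ : ℝ) (f : ℝ → ℝ)
    (Cf : ℝ) (hfO : ∀ r ∈ Ioc (0:ℝ) r₀, |f r| ≤ Cf * r ^ 2)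
    (r₁ : ℝ) (hr₁ : 0 < r₁) (hr₁₀ : r₁ ≤ r₀)
    (y : ℝ → ℝ)
    (hy : ∀ r ∈ Ioc (0:ℝ) r₁, HasDerivAt y (1 + f r * (y r) ^ 2) r)
    (B : ℝ) (hbd : ∀ r ∈ Ioc (0:ℝ) r₁, |y r| ≤ B)
    (hlim : Filter.Tendsto y (nhdsWithin 0 (Ioi 0)) (nhds 0)) :
    ∃ r₂ C', 0 < r₂ ∧ r₂ ≤ r₁ ∧ ∀ r ∈ Ioc (0:ℝ) r₂, |y r - r| ≤ C' * r ^ 5 := by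
  have hf : ∀ r ∈ Ioc (0:ℝ) r₁, |f r| ≤ Cf * r ^ 2 := fun r hr => hfO r ⟨hr.1, hr.2.trans hr₁₀⟩
  have hCf : 0 ≤ Cf := nonneg_of_mul_nonneg_left
    ((abs_nonneg _).trans (hf r₁ ⟨hr₁, le_rfl⟩)) (pow_pos hr₁ 2)
  have hriccati : ∀ r ∈ Ioc (0:ℝ) r₁, ∀ M, |y r| ≤ M →
      |1 + f r * y r ^ 2 - 1| ≤ Cf * M ^ 2 * r ^ 2 := fun r hr M hM => by
    simpa only [add_sub_cancel_left] using abs_mul_sq_le_of_abs_le (hf r hr) hM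
  set c := Cf * B ^ 2 / ((2 : ℕ) + 1)
  have hcubic : ∀ r ∈ Ioc (0:ℝ) r₁, |y r - r| ≤ c * r ^ 3 :=
    abs_sub_self_le_of_abs_deriv_sub_one_le hy hlim fun r hr => hriccati r hr B (hbd r hr)
  set r₂ := min r₁ (1 / (1 + c))
  have hr₂ : Ioc 0 r₂ ⊆ Ioc 0 r₁ := Ioc_subset_Ioc_right (min_le_left _ _)
  have hlinear : ∀ r ∈ Ioc 0 r₂, |y r| ≤ 2 * r := fun r hr =>
    abs_le_two_mul_of_abs_sub_le hr.1.le
      (mul_sq_le_one_of_le_one_div (by positivity) hr.1 (hr.2.trans (min_le_right _ _)))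
      (hcubic r (hr₂ hr))
  refine ⟨r₂, 4 * Cf / ((4 : ℕ) + 1), lt_min hr₁ (by positivity), min_le_left _ _, ?_⟩
  refine abs_sub_self_le_of_abs_deriv_sub_one_le (fun r hr => hy r (hr₂ hr)) hlim fun r hr => ?_
  exact (hriccati r (hr₂ hr) _ (hlinear r hr)).trans_eq (by ring)

/-- Any bounded C¹ solution of the Riccati-type equation y′ = 1 + f y² with
f = O(r²) near 0⁺, which tends to 0 at 0⁺, satisfies y = r + O(r⁵). -/
theorem stmt0 (r₀ : ℝ) (hr₀ : 0 < r₀) (f : ℝ → ℝ)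
    (hf : ContinuousOn f (Ioc 0 r₀))
    (Cf : ℝ) (hfO : ∀ r ∈ Ioc (0:ℝ) r₀, |f r| ≤ Cf * r ^ 2)
    (r₁ : ℝ) (hr₁ : 0 < r₁) (hr₁₀ : r₁ ≤ r₀)
    (y : ℝ → ℝ)
    (hy : ∀ r ∈ Ioc (0:ℝ) r₁, HasDerivAt y (1 + f r * (y r) ^ 2) r)
    (hyC1 : ContinuousOn (fun r => 1 + f r * (y r) ^ 2) (Ioc 0 r₁))
    (B : ℝ) (hbd : ∀ r ∈ Ioc (0:ℝ) r₁, |y r| ≤ B)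
    (hlim : Filter.Tendsto y (nhdsWithin 0 (Ioi 0)) (nhds 0)) :
    ∃ r₂ C', 0 < r₂ ∧ r₂ ≤ r₁ ∧ ∀ r ∈ Ioc (0:ℝ) r₂, |y r - r| ≤ C' * r ^ 5 :=
  stmt0_general r₀ f Cf hfO r₁ hr₁ hr₁₀ y hy B hbd hlim
end

section
/- Let n ≥ 2 and let τ : (0, r₀] → ℝ be continuous with τ(r) = (n−1)/r + O(r) as r → 0⁺. Let g : (0, r₀] → ℝ be continuous with g(r) = O(r) as r → 0⁺. Then there is a unique C¹ solution ξ : (0, r₀] → ℝ of ξ′(r) + τ(r) ξ(r) = g(r) that is bounded as r → 0⁺, and this solution satisfies ξ(r) = O(r²) as r → 0⁺. -/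
open Set MeasureTheory intervalIntegral Filter Topology

/-!
With `τ = k / r + φ`, `k = n - 1`, `φ = O(r)`, the integrating factor
`E r = r ^ k * exp (∫_{r₀}^r φ)` satisfies `E' = τ E` and is comparable to `r ^ k` up to the
constant `exp (Cτ r₀²)`. Hence `ξ = (∫_0^r E g) / E` solves the equation, and `E g = O(r ^ (k+1))`
gives `ξ = O(r²)`. Any two solutions differ by `c / E`, which is of size `c r ^ (-k)`, so a bounded
difference forces `c = 0` as soon as `k ≥ 1`.
-/

lemma eq_of_hasDerivAt_zero_Ioc {f : ℝ → ℝ} {a b : ℝ} (hf : ∀ x ∈ Ioc a b, HasDerivAt f 0 x) :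
    ∀ x ∈ Ioc a b, f x = f b := by
  intro x hx
  have hcont : ContinuousOn f (Icc x b) := fun y hy ↦
    (hf y ⟨hx.1.trans_le hy.1, hy.2⟩).continuousAt.continuousWithinAt
  exact (constant_of_has_deriv_right_zero hcont (fun y hy ↦
    (hf y ⟨hx.1.trans_le hy.1, hy.2.le⟩).hasDerivWithinAt) b ⟨hx.2, le_rfl⟩).symm

lemma eq_zero_of_forall_abs_le_mul {c K r₀ : ℝ} (hr₀ : 0 < r₀)
    (h : ∀ a ∈ Ioc 0 r₀, |c| ≤ K * a) : c = 0 := by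
  have hK : Tendsto (fun a ↦ K * a) (𝓝[>] 0) (𝓝 0) := by
    simpa using ((continuous_const_mul K).tendsto 0).mono_left nhdsWithin_le_nhds
  exact abs_nonpos_iff.1 (ge_of_tendsto hK (eventually_of_mem (Ioc_mem_nhdsGT hr₀) h))

lemma ContinuousOn.comp_min {f : ℝ → ℝ} {r₀ : ℝ} (hr₀ : 0 < r₀)
    (hf : ContinuousOn f (Ioc 0 r₀)) : ContinuousOn (fun r ↦ f (min r r₀)) (Ioi 0) :=
  hf.comp (continuous_id.min continuous_const).continuousOn fun _ hr ↦
    ⟨lt_min hr hr₀, min_le_right _ _⟩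

lemma intervalIntegrable_zero_of_abs_le_pow {ψ : ℝ → ℝ} {r K : ℝ} {p : ℕ} (hr : 0 < r)
    (hψc : ContinuousOn ψ (Ioc 0 r)) (hψ : ∀ t ∈ Ioc 0 r, |ψ t| ≤ K * t ^ p) :
    IntervalIntegrable ψ volume 0 r := by
  have hK : 0 ≤ K :=
    nonneg_of_mul_nonneg_left ((abs_nonneg _).trans (hψ r ⟨hr, le_rfl⟩)) (by positivity)
  rw [intervalIntegrable_iff_integrableOn_Ioc_of_le hr.le]
  refine Integrable.of_bound (hψc.aestronglyMeasurable measurableSet_Ioc) (K * r ^ p)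
    ((ae_restrict_iff' measurableSet_Ioc).2 (Eventually.of_forall fun t ht ↦ ?_))
  exact (hψ t ht).trans (by gcongr; exacts [ht.1.le, ht.2])

lemma abs_integral_zero_le_pow {ψ : ℝ → ℝ} {r K : ℝ} {p : ℕ} (hr : 0 < r)
    (hψ : ∀ t ∈ Ioc 0 r, |ψ t| ≤ K * t ^ p) : |∫ t in 0..r, ψ t| ≤ K * r ^ (p + 1) := by
  have hK : 0 ≤ K :=
    nonneg_of_mul_nonneg_left ((abs_nonneg _).trans (hψ r ⟨hr, le_rfl⟩)) (by positivity)
  calc |∫ t in 0..r, ψ t| ≤ K * r ^ p * |r - 0| := by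
        refine intervalIntegral.norm_integral_le_of_norm_le_const (f := ψ) fun t ht ↦ ?_
        rw [uIoc_of_le hr.le] at ht
        exact (hψ t ht).trans (by gcongr; exacts [ht.1.le, ht.2])
    _ = K * r ^ (p + 1) := by rw [sub_zero, abs_of_pos hr, pow_succ]; ring

/-- `τ` is frozen at `τ r₀` beyond `r₀`, so that the factor is differentiable at `r₀` itself. -/
noncomputable def integratingFactor (k : ℕ) (r₀ : ℝ) (τ : ℝ → ℝ) (r : ℝ) : ℝ :=
  r ^ k * Real.exp (∫ t in r₀..r, (τ (min t r₀) - k / t))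

lemma HasDerivAt.div_of_integratingFactor {E F : ℝ → ℝ} {a b r : ℝ}
    (hE : HasDerivAt E (a * E r) r) (hE0 : E r ≠ 0) (hF : HasDerivAt F (E r * b) r) :
    HasDerivAt (fun s ↦ F s / E s) (b - a * (F r / E r)) r := by
  refine (hF.div hE hE0).congr_deriv ?_
  field_simp

lemma HasDerivAt.integratingFactor_mul_sub {E y₁ y₂ : ℝ → ℝ} {a b r : ℝ}
    (hE : HasDerivAt E (a * E r) r) (h₁ : HasDerivAt y₁ (b - a * y₁ r) r)
    (h₂ : HasDerivAt y₂ (b - a * y₂ r) r) :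
    HasDerivAt (fun s ↦ E s * (y₁ s - y₂ s)) 0 r := by
  refine (hE.mul (h₁.sub h₂)).congr_deriv ?_
  simp only [Pi.sub_apply]
  ring

section IntegratingFactor

variable {k : ℕ} {r₀ Cτ : ℝ} {τ : ℝ → ℝ}

lemma integratingFactor_pos {r : ℝ} (hr : 0 < r) : 0 < integratingFactor k r₀ τ r := by
  unfold integratingFactor
  positivity

lemma hasDerivAt_integratingFactor (hr₀ : 0 < r₀) (hτ : ContinuousOn τ (Ioc 0 r₀)) {r : ℝ}
    (hr : 0 < r) :
    HasDerivAt (integratingFactor k r₀ τ) (τ (min r r₀) * integratingFactor k r₀ τ r) r := by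
  have hφ : ContinuousOn (fun t ↦ τ (min t r₀) - k / t) (Ioi 0) :=
    (hτ.comp_min hr₀).sub (continuousOn_const.div continuousOn_id fun t ht ↦ ht.ne')
  have hint : IntervalIntegrable (fun t ↦ τ (min t r₀) - k / t) volume r₀ r :=
    (hφ.mono fun t ht ↦ lt_of_lt_of_le (lt_min hr₀ hr) ht.1).intervalIntegrable
  have hH := integral_hasDerivAt_right hint (hφ.stronglyMeasurableAtFilter isOpen_Ioi r hr)
    (hφ.continuousAt (isOpen_Ioi.mem_nhds hr))
  refine ((hasDerivAt_pow k r).mul hH.exp).congr_deriv ?_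
  have hpow : (k : ℝ) * r ^ (k - 1) = k / r * r ^ k := by
    rcases k with _ | k
    · simp
    · rw [Nat.add_sub_cancel, pow_succ]
      field_simp [hr.ne']
  rw [integratingFactor, hpow]
  ring

lemma continuousOn_integratingFactor (hr₀ : 0 < r₀) (hτ : ContinuousOn τ (Ioc 0 r₀)) :
    ContinuousOn (integratingFactor k r₀ τ) (Ioi 0) := fun _ hr ↦
  (hasDerivAt_integratingFactor hr₀ hτ hr).continuousAt.continuousWithinAt

lemma abs_integral_sub_div_le (hτ : ∀ r ∈ Ioc 0 r₀, |τ r - k / r| ≤ Cτ * r) {r : ℝ}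
    (hr : r ∈ Ioc 0 r₀) : |∫ t in r₀..r, (τ (min t r₀) - k / t)| ≤ Cτ * r₀ ^ 2 := by
  have hr₀ : 0 < r₀ := hr.1.trans_le hr.2
  have hCτ : 0 ≤ Cτ :=
    nonneg_of_mul_nonneg_left ((abs_nonneg _).trans (hτ r₀ ⟨hr₀, le_rfl⟩)) hr₀
  calc |∫ t in r₀..r, (τ (min t r₀) - k / t)| ≤ Cτ * r₀ * |r - r₀| := by
        refine intervalIntegral.norm_integral_le_of_norm_le_const
          (f := fun t ↦ τ (min t r₀) - k / t) fun t ht ↦ ?_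
        rw [uIoc_of_ge hr.2] at ht
        rw [min_eq_left ht.2, Real.norm_eq_abs]
        exact (hτ t ⟨hr.1.trans ht.1, ht.2⟩).trans (by gcongr; exact ht.2)
    _ ≤ Cτ * r₀ * r₀ := by
        rw [abs_of_nonpos (by linarith [hr.2])]
        gcongr
        linarith [hr.1]
    _ = Cτ * r₀ ^ 2 := by ring

lemma integratingFactor_le (hτ : ∀ r ∈ Ioc 0 r₀, |τ r - k / r| ≤ Cτ * r) {r : ℝ}
    (hr : r ∈ Ioc 0 r₀) : integratingFactor k r₀ τ r ≤ Real.exp (Cτ * r₀ ^ 2) * r ^ k := by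
  rw [integratingFactor, mul_comm]
  exact mul_le_mul_of_nonneg_right
    (Real.exp_le_exp.2 ((le_abs_self _).trans (abs_integral_sub_div_le hτ hr)))
    (pow_nonneg hr.1.le k)

lemma pow_le_integratingFactor (hτ : ∀ r ∈ Ioc 0 r₀, |τ r - k / r| ≤ Cτ * r) {r : ℝ}
    (hr : r ∈ Ioc 0 r₀) : r ^ k ≤ Real.exp (Cτ * r₀ ^ 2) * integratingFactor k r₀ τ r := by
  rw [integratingFactor, mul_left_comm, ← Real.exp_add]
  refine le_mul_of_one_le_right (pow_nonneg hr.1.le k) (Real.one_le_exp ?_)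
  linarith [neg_abs_le (∫ t in r₀..r, (τ (min t r₀) - k / t)), abs_integral_sub_div_le hτ hr]

theorem exists_hasDerivAt_linear_abs_le_pow {g : ℝ → ℝ} {Cg : ℝ} {p : ℕ} (hr₀ : 0 < r₀)
    (hτc : ContinuousOn τ (Ioc 0 r₀)) (hgc : ContinuousOn g (Ioc 0 r₀))
    (hτ : ∀ r ∈ Ioc 0 r₀, |τ r - k / r| ≤ Cτ * r) (hg : ∀ r ∈ Ioc 0 r₀, |g r| ≤ Cg * r ^ p) :
    ∃ ξ : ℝ → ℝ, (∀ r ∈ Ioc 0 r₀, HasDerivAt ξ (g r - τ r * ξ r) r) ∧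
      ∃ C, ∀ r ∈ Ioc 0 r₀, |ξ r| ≤ C * r ^ (p + 1) := by
  set E := integratingFactor k r₀ τ
  set M := Cτ * r₀ ^ 2
  set ψ := fun t ↦ E t * g (min t r₀)
  have hCg : 0 ≤ Cg :=
    nonneg_of_mul_nonneg_left ((abs_nonneg _).trans (hg r₀ ⟨hr₀, le_rfl⟩)) (by positivity)
  have hψc : ContinuousOn ψ (Ioi 0) :=
    (continuousOn_integratingFactor hr₀ hτc).mul (hgc.comp_min hr₀)
  have hψ : ∀ t ∈ Ioc 0 r₀, |ψ t| ≤ Real.exp M * Cg * t ^ (p + k) := by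
    intro t ht
    rw [abs_mul, abs_of_pos (integratingFactor_pos ht.1), min_eq_left ht.2]
    calc E t * |g t| ≤ Real.exp M * t ^ k * (Cg * t ^ p) :=
          mul_le_mul (integratingFactor_le hτ ht) (hg t ht) (abs_nonneg _)
            (mul_nonneg (Real.exp_pos M).le (pow_nonneg ht.1.le k))
      _ = Real.exp M * Cg * t ^ (p + k) := by ring
  refine ⟨fun r ↦ (∫ t in 0..r, ψ t) / E r, fun r hr ↦ ?_, Real.exp M * Real.exp M * Cg,
    fun r hr ↦ ?_⟩
  · have hψr : ∀ t ∈ Ioc 0 r, |ψ t| ≤ Real.exp M * Cg * t ^ (p + k) :=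
      fun t ht ↦ hψ t ⟨ht.1, ht.2.trans hr.2⟩
    have hI := integral_hasDerivAt_right
      (intervalIntegrable_zero_of_abs_le_pow hr.1 (hψc.mono fun t ht ↦ ht.1) hψr)
      (hψc.stronglyMeasurableAtFilter isOpen_Ioi r hr.1)
      (hψc.continuousAt (isOpen_Ioi.mem_nhds hr.1))
    simpa only [ψ, min_eq_left hr.2] using
      (hasDerivAt_integratingFactor hr₀ hτc hr.1).div_of_integratingFactor
        (integratingFactor_pos hr.1).ne' hI
  · have hEr := integratingFactor_pos (k := k) (r₀ := r₀) (τ := τ) hr.1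
    rw [abs_div, abs_of_pos hEr, div_le_iff₀ hEr]
    calc |∫ t in 0..r, ψ t| ≤ Real.exp M * Cg * r ^ (p + k + 1) :=
          abs_integral_zero_le_pow hr.1 fun t ht ↦ hψ t ⟨ht.1, ht.2.trans hr.2⟩
      _ = Real.exp M * Cg * r ^ (p + 1) * r ^ k := by ring
      _ ≤ Real.exp M * Cg * r ^ (p + 1) * (Real.exp M * E r) := by
          have : 0 ≤ Real.exp M * Cg * r ^ (p + 1) := by have := hr.1; positivity
          exact mul_le_mul_of_nonneg_left (pow_le_integratingFactor hτ hr) this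
      _ = Real.exp M * Real.exp M * Cg * r ^ (p + 1) * E r := by ring

theorem eqOn_of_hasDerivAt_linear_of_bounded {g ξ₁ ξ₂ : ℝ → ℝ} {B₁ B₂ : ℝ} (hk : 1 ≤ k)
    (hr₀ : 0 < r₀) (hτc : ContinuousOn τ (Ioc 0 r₀))
    (hτ : ∀ r ∈ Ioc 0 r₀, |τ r - k / r| ≤ Cτ * r)
    (h₁ : ∀ r ∈ Ioc 0 r₀, HasDerivAt ξ₁ (g r - τ r * ξ₁ r) r)
    (h₂ : ∀ r ∈ Ioc 0 r₀, HasDerivAt ξ₂ (g r - τ r * ξ₂ r) r)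
    (hB₁ : ∀ r ∈ Ioc 0 r₀, |ξ₁ r| ≤ B₁) (hB₂ : ∀ r ∈ Ioc 0 r₀, |ξ₂ r| ≤ B₂) :
    EqOn ξ₁ ξ₂ (Ioc 0 r₀) := by
  set E := integratingFactor k r₀ τ
  set M := Cτ * r₀ ^ 2
  have hconst : ∀ a ∈ Ioc 0 r₀, E a * (ξ₁ a - ξ₂ a) = E r₀ * (ξ₁ r₀ - ξ₂ r₀) :=
    eq_of_hasDerivAt_zero_Ioc fun r hr ↦ by
      have hE := hasDerivAt_integratingFactor (k := k) hr₀ hτc hr.1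
      rw [min_eq_left hr.2] at hE
      exact hE.integratingFactor_mul_sub (h₁ r hr) (h₂ r hr)
  have hB : 0 ≤ B₁ + B₂ := add_nonneg ((abs_nonneg _).trans (hB₁ r₀ ⟨hr₀, le_rfl⟩))
    ((abs_nonneg _).trans (hB₂ r₀ ⟨hr₀, le_rfl⟩))
  have hc : E r₀ * (ξ₁ r₀ - ξ₂ r₀) = 0 := by
    refine eq_zero_of_forall_abs_le_mul (K := Real.exp M * r₀ ^ (k - 1) * (B₁ + B₂)) hr₀
      fun a ha ↦ ?_
    rw [← hconst a ha, abs_mul, abs_of_pos (integratingFactor_pos ha.1)]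
    calc E a * |ξ₁ a - ξ₂ a| ≤ Real.exp M * a ^ k * (B₁ + B₂) :=
          mul_le_mul (integratingFactor_le hτ ha)
            ((abs_sub _ _).trans (add_le_add (hB₁ a ha) (hB₂ a ha))) (abs_nonneg _)
            (mul_nonneg (Real.exp_pos M).le (pow_nonneg ha.1.le k))
      _ = Real.exp M * a ^ (k - 1) * (B₁ + B₂) * a := by
          rw [← pow_sub_one_mul (by omega : k ≠ 0) a]
          ring
      _ ≤ Real.exp M * r₀ ^ (k - 1) * (B₁ + B₂) * a := by
          gcongr <;> linarith [ha.1, ha.2]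
  intro r hr
  have := hconst r hr
  rw [hc, mul_eq_zero, sub_eq_zero] at this
  exact this.resolve_left (integratingFactor_pos hr.1).ne'

end IntegratingFactor

/-- For τ = (n−1)/r + O(r) and g = O(r), there is a unique bounded C¹ solution of
ξ′ + τ ξ = g on (0,r₀], and it is O(r²). -/
theorem stmt1 (n : ℕ) (hn : 2 ≤ n) (r₀ : ℝ) (hr₀ : 0 < r₀)
    (τ g : ℝ → ℝ)
    (hτc : ContinuousOn τ (Ioc 0 r₀)) (hgc : ContinuousOn g (Ioc 0 r₀))
    (Cτ Cg : ℝ)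
    (hτ : ∀ r ∈ Ioc (0:ℝ) r₀, |τ r - ((n:ℝ) - 1)/r| ≤ Cτ * r)
    (hg : ∀ r ∈ Ioc (0:ℝ) r₀, |g r| ≤ Cg * r) :
    ∃ ξ : ℝ → ℝ,
      ((∀ r ∈ Ioc (0:ℝ) r₀, HasDerivAt ξ (g r - τ r * ξ r) r) ∧
        (∃ B, ∀ r ∈ Ioc (0:ℝ) r₀, |ξ r| ≤ B)) ∧
      (∃ C, ∀ r ∈ Ioc (0:ℝ) r₀, |ξ r| ≤ C * r ^ 2) ∧
      (∀ ξ' : ℝ → ℝ,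
        ((∀ r ∈ Ioc (0:ℝ) r₀, HasDerivAt ξ' (g r - τ r * ξ' r) r) ∧
          (∃ B, ∀ r ∈ Ioc (0:ℝ) r₀, |ξ' r| ≤ B)) →
        ∀ r ∈ Ioc (0:ℝ) r₀, ξ' r = ξ r) := by
  obtain ⟨k, rfl⟩ : ∃ k, n = k + 1 := ⟨n - 1, by omega⟩
  have hτk : ∀ r ∈ Ioc 0 r₀, |τ r - k / r| ≤ Cτ * r := fun r hr ↦ by simpa using hτ r hr
  obtain ⟨ξ, hξ, C, hC⟩ := exists_hasDerivAt_linear_abs_le_pow (p := 1) hr₀ hτc hgc hτk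
    fun r hr ↦ by simpa using hg r hr
  have hbdd : ∀ r ∈ Ioc 0 r₀, |ξ r| ≤ |C| * r₀ ^ 2 := fun r hr ↦
    (hC r hr).trans (mul_le_mul (le_abs_self C) (pow_le_pow_left₀ hr.1.le hr.2 2)
      (sq_nonneg r) (abs_nonneg C))
  refine ⟨ξ, ⟨hξ, _, hbdd⟩, ⟨C, hC⟩, fun ξ' ⟨hξ', B, hB⟩ ↦ ?_⟩
  exact eqOn_of_hasDerivAt_linear_of_bounded (by omega) hr₀ hτc hτk hξ' hξ hB hbdd
end

section
/- Let n ≥ 2, N ≥ 5, and let τ : (0, r₀] → ℝ be continuous with τ(r) = (n−1)/r + Σ_{i=3}^{N−1} τᵢ rⁱ + O(r^{N}) as r → 0⁺ (τᵢ ∈ ℝ). Suppose g : (0, r₀] → ℝ is continuous with g(r) = Σ_{i=1}^{N−3} fᵢ rⁱ + O(r^{N−2}). Then the unique bounded solution ξ of ξ′ + τ ξ = g on (0, r₀] admits an expansion ξ(r) = Σ_{i=2}^{N−2} ξᵢ rⁱ + O(r^{N−1}) as r → 0⁺, for some real constants ξᵢ. -/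
/-!
Multiplying by the integrating factor `t ^ ν`, `ν = n - 1`, removes the singular part of `τ`:
`w = t ^ ν * ξ` satisfies `w' = t ^ ν * (g - (τ - ν / t) * ξ)`, and `w → 0` at `0` because `ξ` is
bounded. The mean value theorem on `[s, r]`, with `s → 0`, turns `ξ = O(t ^ j)` and `g = O(t ^ j)`
into `ξ = O(t ^ (j + 1))`; iterating, `g = O(t ^ p)` gives `ξ = O(t ^ (p + 1))`. Expansions are then
peeled off one term at a time: a source term `a * t ^ p` is produced by `b * t ^ (p + 1)` with
`b = a / (p + 1 + ν)`, and `ξ - b * t ^ (p + 1)` solves the same equation with a source whose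
expansion starts one power higher.
-/

open Set Filter Asymptotics Topology

def HasPowExpansion (r₀ : ℝ) (f : ℝ → ℝ) (p q : ℕ) : Prop :=
  ∃ c : ℕ → ℝ, (fun t => f t - ∑ i ∈ Finset.Ico p q, c i * t ^ i) =O[𝓟 (Ioc 0 r₀)] (· ^ q)

section Expansions

variable {r₀ : ℝ} {f g : ℝ → ℝ} {p q : ℕ}

lemma isBigO_pow_pow_of_le (hpq : p ≤ q) :
    (fun t : ℝ => t ^ q) =O[𝓟 (Ioc 0 r₀)] (· ^ p) := by
  refine isBigO_principal.2 ⟨r₀ ^ (q - p), fun t ht => ?_⟩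
  rw [Real.norm_of_nonneg (pow_nonneg ht.1.le q), Real.norm_of_nonneg (pow_nonneg ht.1.le p),
    ← Nat.sub_add_cancel hpq, pow_add, Nat.add_sub_cancel]
  exact mul_le_mul_of_nonneg_right (pow_le_pow_left₀ ht.1.le ht.2 _) (pow_nonneg ht.1.le _)

lemma hasPowExpansion_iff : HasPowExpansion r₀ f p q ↔
    ∃ (c : ℕ → ℝ) (C : ℝ), ∀ t ∈ Ioc 0 r₀,
      |f t - ∑ i ∈ Finset.Ico p q, c i * t ^ i| ≤ C * t ^ q := by
  refine exists_congr fun c => isBigO_principal.trans (exists_congr fun C => ?_)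
  refine forall₂_congr fun t ht => ?_
  rw [Real.norm_eq_abs, Real.norm_of_nonneg (pow_nonneg ht.1.le q)]

lemma hasPowExpansion_self_iff :
    HasPowExpansion r₀ f p p ↔ f =O[𝓟 (Ioc 0 r₀)] (· ^ p) := by
  simp [HasPowExpansion]

lemma hasPowExpansion_iff_sub_mul_pow (hpq : p < q) :
    HasPowExpansion r₀ f p q ↔ ∃ a, HasPowExpansion r₀ (fun t => f t - a * t ^ p) (p + 1) q := by
  constructor
  · rintro ⟨c, hc⟩
    exact ⟨c p, c, by simpa only [Finset.sum_eq_sum_Ico_succ_bot hpq, sub_sub] using hc⟩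
  · rintro ⟨a, c, hc⟩
    refine ⟨Function.update c p a, ?_⟩
    convert hc using 2 with t
    rw [Finset.sum_eq_sum_Ico_succ_bot hpq, Function.update_self, sub_sub]
    congr 2
    refine Finset.sum_congr rfl fun i hi => ?_
    rw [Function.update_of_ne (by simp at hi; omega)]

lemma HasPowExpansion.sub (hf : HasPowExpansion r₀ f p q) (hg : HasPowExpansion r₀ g p q) :
    HasPowExpansion r₀ (fun t => f t - g t) p q := by
  obtain ⟨c, hc⟩ := hf
  obtain ⟨d, hd⟩ := hg
  refine ⟨c - d, (hc.sub hd).congr_left fun t => ?_⟩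
  simp only [Pi.sub_apply, sub_mul, Finset.sum_sub_distrib]
  ring

lemma HasPowExpansion.const_mul (hf : HasPowExpansion r₀ f p q) (a : ℝ) :
    HasPowExpansion r₀ (fun t => a * f t) p q := by
  obtain ⟨c, hc⟩ := hf
  refine ⟨fun i => a * c i, (hc.const_mul_left a).congr_left fun t => ?_⟩
  simp only [mul_sub, Finset.mul_sum, mul_assoc]

lemma HasPowExpansion.mul_pow (hf : HasPowExpansion r₀ f p q) (e : ℕ) :
    HasPowExpansion r₀ (fun t => f t * t ^ e) (p + e) (q + e) := by
  obtain ⟨c, hc⟩ := hf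
  refine ⟨fun i => c (i - e), ?_⟩
  refine ((hc.mul (isBigO_refl (· ^ e) _)).congr (fun t => ?_) (fun t => ?_))
  · rw [← Finset.sum_Ico_add', sub_mul, Finset.sum_mul]
    simp only [Nat.add_sub_cancel, pow_add, mul_assoc]
  · rw [pow_add]

lemma HasPowExpansion.mono_left (hf : HasPowExpansion r₀ f p q) {p' : ℕ} (hp : p' ≤ p) :
    HasPowExpansion r₀ f p' q := by
  obtain ⟨c, hc⟩ := hf
  refine ⟨fun i => if p ≤ i then c i else 0, hc.congr_left fun t => ?_⟩
  simp only [ite_mul, zero_mul, ← Finset.sum_filter]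
  congr 2
  ext i
  simp only [Finset.mem_filter, Finset.mem_Ico]
  omega

lemma HasPowExpansion.of_add_one (hf : HasPowExpansion r₀ f p (q + 1)) (hpq : p ≤ q) :
    HasPowExpansion r₀ f p q := by
  obtain ⟨c, hc⟩ := hf
  refine ⟨c, ((hc.trans (isBigO_pow_pow_of_le q.le_succ)).add
    ((isBigO_refl (· ^ q) _).const_mul_left (c q))).congr_left fun t => ?_⟩
  rw [Finset.sum_Ico_succ_top hpq]
  ring

lemma HasPowExpansion.mono_right (hf : HasPowExpansion r₀ f p q) {q' : ℕ} (hpq : p ≤ q')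
    (hq : q' ≤ q) : HasPowExpansion r₀ f p q' := by
  induction q, hq using Nat.le_induction with
  | base => exact hf
  | succ q hq ih => exact ih (hf.of_add_one (hpq.trans hq))

end Expansions

lemma le_of_forall_le_mul_pow_add {x y E r : ℝ} {m : ℕ} (hm : m ≠ 0) (hr : 0 < r)
    (h : ∀ s ∈ Ioc 0 r, x ≤ E * s ^ m + y) : x ≤ y := by
  have hcont : Continuous fun s : ℝ => E * s ^ m + y := by fun_prop
  have hlim : Tendsto (fun s => E * s ^ m + y) (𝓝[>] 0) (𝓝 y) :=
    tendsto_nhdsWithin_of_tendsto_nhds (by simpa [zero_pow hm] using hcont.tendsto 0)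
  refine ge_of_tendsto hlim ?_
  filter_upwards [Ioo_mem_nhdsGT hr] with s hs
  exact h s (Ioo_subset_Ioc_self hs)

section IntegratingFactor

variable {r₀ : ℝ} {ν : ℕ} {τ h η : ℝ → ℝ}

lemma hasDerivAt_pow_mul_of_hasDerivAt {t : ℝ} (ht : t ≠ 0)
    (hη : HasDerivAt η (h t - τ t * η t) t) :
    HasDerivAt (fun s => s ^ ν * η s) (t ^ ν * (h t - (τ t - ν / t) * η t)) t := by
  refine ((hasDerivAt_pow ν t).mul hη).congr_deriv ?_
  rcases ν with _ | ν
  · simp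
  · field_simp
    push_cast
    ring

lemma isBigO_pow_succ_of_isBigO_pow (hν : 0 < ν)
    (hσ : (fun t => τ t - ν / t) =O[𝓟 (Ioc 0 r₀)] (fun _ => (1 : ℝ)))
    (hη : ∀ t ∈ Ioc 0 r₀, HasDerivAt η (h t - τ t * η t) t) {j : ℕ}
    (hh : h =O[𝓟 (Ioc 0 r₀)] (· ^ j)) (hηj : η =O[𝓟 (Ioc 0 r₀)] (· ^ j)) :
    η =O[𝓟 (Ioc 0 r₀)] (· ^ (j + 1)) := by
  obtain ⟨A, hA0, hA⟩ := hσ.exists_nonneg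
  obtain ⟨D, hD0, hD⟩ := hh.exists_nonneg
  obtain ⟨E, hE0, hE⟩ := hηj.exists_nonneg
  simp only [isBigOWith_principal, Real.norm_eq_abs, norm_one, mul_one] at hA hD hE
  refine isBigO_principal.2 ⟨D + A * E, fun r hr => ?_⟩
  have hr₀ : Ioc 0 r ⊆ Ioc 0 r₀ := Ioc_subset_Ioc_right hr.2
  have hDAE : 0 ≤ D + A * E := add_nonneg hD0 (mul_nonneg hA0 hE0)
  set K := (D + A * E) * r ^ (ν + j)
  have hw' : ∀ t ∈ Ioc 0 r, |t ^ ν * (h t - (τ t - ν / t) * η t)| ≤ K := by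
    intro t ht
    have ht₀ := hr₀ ht
    have hDt := hD t ht₀
    have hEt := hE t ht₀
    rw [abs_of_pos (pow_pos ht.1 j)] at hDt hEt
    calc |t ^ ν * (h t - (τ t - ν / t) * η t)|
        ≤ t ^ ν * (D * t ^ j + A * (E * t ^ j)) := by
          rw [abs_mul, abs_of_pos (pow_pos ht.1 ν)]
          refine mul_le_mul_of_nonneg_left ((abs_sub _ _).trans (add_le_add hDt ?_))
            (pow_nonneg ht.1.le ν)
          rw [abs_mul]
          exact mul_le_mul (hA t ht₀) hEt (abs_nonneg _) hA0
      _ = (D + A * E) * t ^ (ν + j) := by ring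
      _ ≤ K := mul_le_mul_of_nonneg_left (pow_le_pow_left₀ ht.1.le ht.2 _) hDAE
  have hmvt : ∀ s ∈ Ioc 0 r, |r ^ ν * η r| ≤ E * s ^ (ν + j) + K * r := by
    intro s hs
    have hlip := Convex.norm_image_sub_le_of_norm_hasDerivWithin_le
      (fun t ht => (hasDerivAt_pow_mul_of_hasDerivAt ht.1.ne' (hη t (hr₀ ht))).hasDerivWithinAt)
      hw' (convex_Ioc 0 r) hs ⟨hr.1, le_rfl⟩
    have hEs := hE s (hr₀ hs)
    rw [abs_of_pos (pow_pos hs.1 j)] at hEs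
    have hws : |s ^ ν * η s| ≤ E * s ^ (ν + j) := by
      rw [abs_mul, abs_of_pos (pow_pos hs.1 ν), pow_add, mul_left_comm]
      exact mul_le_mul_of_nonneg_left hEs (pow_nonneg hs.1.le ν)
    have hrs : K * |r - s| ≤ K * r := by
      rw [abs_of_nonneg (sub_nonneg.2 hs.2)]
      exact mul_le_mul_of_nonneg_left (by linarith [hs.1])
        (mul_nonneg hDAE (pow_nonneg hr.1.le _))
    simp only [Real.norm_eq_abs] at hlip
    linarith [abs_sub_abs_le_abs_sub (r ^ ν * η r) (s ^ ν * η s)]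
  have hwr := le_of_forall_le_mul_pow_add (by omega) hr.1 hmvt
  rw [abs_mul, abs_of_pos (pow_pos hr.1 ν)] at hwr
  rw [Real.norm_eq_abs, Real.norm_of_nonneg (pow_nonneg hr.1.le _)]
  refine le_of_mul_le_mul_left (hwr.trans_eq ?_) (pow_pos hr.1 ν)
  ring

lemma isBigO_pow_succ_of_hasDerivAt (hν : 0 < ν)
    (hσ : (fun t => τ t - ν / t) =O[𝓟 (Ioc 0 r₀)] (fun _ => (1 : ℝ)))
    (hη : ∀ t ∈ Ioc 0 r₀, HasDerivAt η (h t - τ t * η t) t)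
    (hbd : η =O[𝓟 (Ioc 0 r₀)] (fun _ => (1 : ℝ))) {p : ℕ} (hh : h =O[𝓟 (Ioc 0 r₀)] (· ^ p)) :
    η =O[𝓟 (Ioc 0 r₀)] (· ^ (p + 1)) := by
  suffices ∀ j ≤ p + 1, η =O[𝓟 (Ioc 0 r₀)] (· ^ j) from this _ le_rfl
  intro j hj
  induction j with
  | zero => simpa using hbd
  | succ j ih =>
    exact isBigO_pow_succ_of_isBigO_pow hν hσ hη (hh.trans (isBigO_pow_pow_of_le (by omega)))
      (ih (by omega))

theorem hasPowExpansion_of_hasDerivAt (hν : 0 < ν) {k : ℕ}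
    (hσ : HasPowExpansion r₀ (fun t => τ t - ν / t) 0 k)
    (hη : ∀ t ∈ Ioc 0 r₀, HasDerivAt η (h t - τ t * η t) t)
    (hbd : η =O[𝓟 (Ioc 0 r₀)] (fun _ => (1 : ℝ))) {p : ℕ} (hh : HasPowExpansion r₀ h p (p + k)) :
    HasPowExpansion r₀ η (p + 1) (p + 1 + k) := by
  induction k generalizing p η h with
  | zero =>
    rw [add_zero, hasPowExpansion_self_iff] at hh ⊢
    have hσ₀ := hasPowExpansion_self_iff.1 hσ
    simp only [pow_zero] at hσ₀
    exact isBigO_pow_succ_of_hasDerivAt hν hσ₀ hη hbd hh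
  | succ k ih =>
    obtain ⟨a, ha⟩ := (hasPowExpansion_iff_sub_mul_pow (by omega)).1 hh
    rw [show p + (k + 1) = p + 1 + k by omega] at ha
    have hσk := hσ.mono_right k.zero_le k.le_succ
    set b := a / (p + 1 + ν)
    have hη₁ : ∀ t ∈ Ioc 0 r₀, HasDerivAt (fun t => η t - b * t ^ (p + 1))
        ((h t - a * t ^ p - b * ((τ t - ν / t) * t ^ (p + 1)))
          - τ t * (η t - b * t ^ (p + 1))) t := by
      intro t ht
      refine ((hη t ht).sub ((hasDerivAt_pow (p + 1) t).const_mul b)).congr_deriv ?_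
      have : a = b * (p + 1 + ν) := by simp only [b]; field_simp
      have ht₀ : t ≠ 0 := ht.1.ne'
      rw [this]
      field_simp
      push_cast
      ring
    have hsrc : HasPowExpansion r₀ (fun t => h t - a * t ^ p - b * ((τ t - ν / t) * t ^ (p + 1)))
        (p + 1) (p + 1 + k) := by
      have := (hσk.mul_pow (p + 1)).const_mul b
      rw [zero_add, add_comm k] at this
      exact ha.sub this
    have hbd₁ : (fun t => η t - b * t ^ (p + 1)) =O[𝓟 (Ioc 0 r₀)] (fun _ => (1 : ℝ)) := by
      have := (isBigO_pow_pow_of_le (r₀ := r₀) (Nat.zero_le (p + 1))).const_mul_left b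
      simp only [pow_zero] at this
      exact hbd.sub this
    refine (hasPowExpansion_iff_sub_mul_pow (by omega)).2 ⟨b, ?_⟩
    rw [show p + 1 + (k + 1) = p + 1 + 1 + k by omega]
    exact ih hσk hη₁ hbd₁ hsrc

end IntegratingFactor

theorem stmt2_general (n N : ℕ) (hn : 2 ≤ n) (hN : 5 ≤ N) (r₀ : ℝ)
    (τ g : ℝ → ℝ) (τc fc : ℕ → ℝ)
    (Cτ Cg : ℝ)
    (hτ : ∀ r ∈ Ioc (0:ℝ) r₀,
      |τ r - (((n:ℝ) - 1)/r + ∑ i ∈ Finset.Icc 3 (N-1), τc i * r ^ i)| ≤ Cτ * r ^ N)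
    (hg : ∀ r ∈ Ioc (0:ℝ) r₀,
      |g r - ∑ i ∈ Finset.Icc 1 (N-3), fc i * r ^ i| ≤ Cg * r ^ (N-2))
    (ξ : ℝ → ℝ)
    (hξ : ∀ r ∈ Ioc (0:ℝ) r₀, HasDerivAt ξ (g r - τ r * ξ r) r)
    (hbd : ∃ B, ∀ r ∈ Ioc (0:ℝ) r₀, |ξ r| ≤ B) :
    ∃ (ξc : ℕ → ℝ) (C : ℝ),
      ∀ r ∈ Ioc (0:ℝ) r₀,
        |ξ r - ∑ i ∈ Finset.Icc 2 (N-2), ξc i * r ^ i| ≤ C * r ^ (N-1) := by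
  have hcast : ((n - 1 : ℕ) : ℝ) = n - 1 := by rw [Nat.cast_sub (by omega), Nat.cast_one]
  have hσ : HasPowExpansion r₀ (fun t => τ t - ((n - 1 : ℕ) : ℝ) / t) 3 N := by
    refine hasPowExpansion_iff.2 ⟨τc, Cτ, fun t ht => ?_⟩
    rw [hcast, sub_sub, show N = N - 1 + 1 by omega, Finset.Ico_add_one_right_eq_Icc,
      Nat.sub_add_cancel (by omega : 1 ≤ N)]
    exact hτ t ht
  have hg' : HasPowExpansion r₀ g 1 (1 + (N - 3)) := by
    refine hasPowExpansion_iff.2 ⟨fc, Cg, fun t ht => ?_⟩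
    rw [show 1 + (N - 3) = N - 3 + 1 by omega, Finset.Ico_add_one_right_eq_Icc,
      show N - 3 + 1 = N - 2 by omega]
    exact hg t ht
  have hbd' : ξ =O[𝓟 (Ioc 0 r₀)] (fun _ => (1 : ℝ)) := by
    obtain ⟨B, hB⟩ := hbd
    exact isBigO_principal.2 ⟨B, by simpa using hB⟩
  have hξc := hasPowExpansion_of_hasDerivAt (k := N - 3) (by omega)
    ((hσ.mono_left (Nat.zero_le 3)).mono_right (Nat.zero_le _) (by omega)) hξ hbd' hg'
  rw [show 1 + 1 + (N - 3) = N - 2 + 1 by omega] at hξc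
  obtain ⟨c, C, hC⟩ := hasPowExpansion_iff.1 hξc
  refine ⟨c, C, fun r hr => ?_⟩
  rw [← Finset.Ico_add_one_right_eq_Icc, ← show N - 2 + 1 = N - 1 by omega]
  exact hC r hr

/-- Polynomial asymptotic expansions of τ and of the source g propagate to the
bounded solution of ξ′ + τ ξ = g, with a shift of one power of r. -/
theorem stmt2 (n N : ℕ) (hn : 2 ≤ n) (hN : 5 ≤ N) (r₀ : ℝ) (hr₀ : 0 < r₀)
    (τ g : ℝ → ℝ) (τc fc : ℕ → ℝ)
    (hτc : ContinuousOn τ (Ioc 0 r₀)) (hgc : ContinuousOn g (Ioc 0 r₀))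
    (Cτ Cg : ℝ)
    (hτ : ∀ r ∈ Ioc (0:ℝ) r₀,
      |τ r - (((n:ℝ) - 1)/r + ∑ i ∈ Finset.Icc 3 (N-1), τc i * r ^ i)| ≤ Cτ * r ^ N)
    (hg : ∀ r ∈ Ioc (0:ℝ) r₀,
      |g r - ∑ i ∈ Finset.Icc 1 (N-3), fc i * r ^ i| ≤ Cg * r ^ (N-2))
    (ξ : ℝ → ℝ)
    (hξ : ∀ r ∈ Ioc (0:ℝ) r₀, HasDerivAt ξ (g r - τ r * ξ r) r)
    (hbd : ∃ B, ∀ r ∈ Ioc (0:ℝ) r₀, |ξ r| ≤ B) :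
    ∃ (ξc : ℕ → ℝ) (C : ℝ),
      ∀ r ∈ Ioc (0:ℝ) r₀,
        |ξ r - ∑ i ∈ Finset.Icc 2 (N-2), ξc i * r ^ i| ≤ C * r ^ (N-1) :=
  stmt2_general n N hn hN r₀ τ g τc fc Cτ Cg hτ hg ξ hξ hbd
end
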